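/- Let r ∈ |F^×| and let W ∈ A^{m−1}(r)[z_m] be a Weierstrass polynomial of degree d > 0. Then there exists b ∈ F with |b| ≤ r such that W(0,…,0,b) = 0. -/

import Mathlib

open MvPowerSeries Filter

set_option linter.unusedSectionVars false

namespace NA

variable (F : Type) [NormedField F] [IsUltrametricDist F]

/-- The value group `|F^×|` of a normed field, as a set of real numbers. -/
def VG : Set ℝ := {r | ∃ c : F, c ≠ 0 ∧ ‖c‖ = r}

lemma VG.pos {r : ℝ} (hr : r ∈ VG F) : 0 < r := by
  obtain ⟨c, hc, rfl⟩ := hr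
  exact norm_pos_iff.mpr hc

/-- The total degree `|γ|` of a multi-index. -/
def mdeg {m : ℕ} (γ : Fin m →₀ ℕ) : ℕ := γ.sum fun _ n => n

lemma mdeg_add {m : ℕ} (α β : Fin m →₀ ℕ) : mdeg (α + β) = mdeg α + mdeg β :=
  Finsupp.sum_add_index' (fun _ => rfl) (fun _ _ _ => rfl)

/-- The ring `A^m(r)` of power series converging on the closed ball of radius `r`:
those `f = Σ a_γ z^γ` with `|a_γ| r^{|γ|} → 0` as `|γ| → ∞`. -/
def A (m : ℕ) (r : ℝ) : Subring (MvPowerSeries (Fin m) F) where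
  carrier := {f | Tendsto (fun γ : Fin m →₀ ℕ => ‖coeff γ f‖ * r ^ mdeg γ)
    cofinite (nhds 0)}
  zero_mem' := by
    simp only [Set.mem_setOf_eq, map_zero, norm_zero, zero_mul]
    exact tendsto_const_nhds
  one_mem' := by
    refine tendsto_const_nhds.congr' ?_
    refine Filter.eventuallyEq_of_mem ((Set.finite_singleton (0 : Fin m →₀ ℕ)).compl_mem_cofinite) ?_
    intro γ hγ
    have : (γ : Fin m →₀ ℕ) ≠ 0 := by simpa using hγ
    simp [MvPowerSeries.coeff_one, this]
  add_mem' := by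
    intro f g hf hg
    simp only [Set.mem_setOf_eq] at hf hg ⊢
    rw [tendsto_zero_iff_abs_tendsto_zero] at hf hg ⊢
    refine squeeze_zero (fun γ => abs_nonneg _) (fun γ => ?_) (by simpa using hf.add hg)
    simp only [Function.comp_apply, abs_mul, abs_norm, abs_pow, map_add, ← add_mul]
    exact mul_le_mul_of_nonneg_right (norm_add_le _ _) (by positivity)
  neg_mem' := by
    intro f hf
    simpa only [Set.mem_setOf_eq, map_neg, norm_neg] using hf
  mul_mem' := by
    intro f g hf hg
    simp only [Set.mem_setOf_eq] at hf hg ⊢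
    rw [tendsto_zero_iff_abs_tendsto_zero] at hf hg ⊢
    have habs : ∀ (h : MvPowerSeries (Fin m) F),
        (abs ∘ fun γ : Fin m →₀ ℕ => ‖coeff γ h‖ * r ^ mdeg γ)
          = fun γ => ‖coeff γ h‖ * |r| ^ mdeg γ := by
      intro h; funext γ
      simp [Function.comp_apply, abs_mul, abs_pow]
    rw [habs] at hf hg ⊢
    set v := fun (h : MvPowerSeries (Fin m) F) (γ : Fin m →₀ ℕ) =>
      ‖coeff γ h‖ * |r| ^ mdeg γ with hv
    have vnonneg : ∀ h γ, 0 ≤ v h γ := fun h γ => by positivity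
    have finlt : ∀ (h : MvPowerSeries (Fin m) F),
        Tendsto (v h) cofinite (nhds 0) → ∀ δ : ℝ, 0 < δ → {γ | ¬ v h γ < δ}.Finite := by
      intro h hh δ hδ
      have := (Metric.tendsto_nhds.mp hh) δ hδ
      rw [Filter.eventually_cofinite] at this
      refine this.subset ?_
      intro γ hγ
      simp only [Set.mem_setOf_eq, Real.dist_eq, sub_zero] at *
      intro hc; exact hγ (lt_of_abs_lt hc)
    have bound : ∀ (h : MvPowerSeries (Fin m) F),
        Tendsto (v h) cofinite (nhds 0) → ∃ M : ℝ, 1 ≤ M ∧ ∀ γ, v h γ ≤ M := by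
      intro h hh
      have h1 := finlt h hh 1 one_pos
      refine ⟨1 + ∑ γ ∈ h1.toFinset, v h γ,
        le_add_of_nonneg_right (Finset.sum_nonneg fun γ _ => vnonneg h γ), ?_⟩
      intro γ
      by_cases hγ : γ ∈ h1.toFinset
      · have := Finset.single_le_sum (f := v h) (fun γ _ => vnonneg h γ) hγ
        linarith
      · simp only [Set.Finite.mem_toFinset, Set.mem_setOf_eq, not_not] at hγ
        have hs : (0:ℝ) ≤ ∑ γ ∈ h1.toFinset, v h γ :=
          Finset.sum_nonneg fun γ _ => vnonneg h γ
        linarith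
    rw [Metric.tendsto_nhds]
    intro ε hε
    rw [Filter.eventually_cofinite]
    obtain ⟨Mf, hMf1, hMf⟩ := bound f hf
    obtain ⟨Mg, hMg1, hMg⟩ := bound g hg
    set M := max Mf Mg with hMdef
    have hM1 : (1:ℝ) ≤ M := le_trans hMf1 (le_max_left _ _)
    have hM0 : (0:ℝ) < M := lt_of_lt_of_le one_pos hM1
    set δ := ε / M with hδdef
    have hδ0 : 0 < δ := div_pos hε hM0
    have hSf := finlt f hf δ hδ0
    have hSg := finlt g hg δ hδ0
    refine ((hSf.prod hSg).image
      (fun p : (Fin m →₀ ℕ) × (Fin m →₀ ℕ) => p.1 + p.2)).subset ?_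
    intro γ hγ
    simp only [Set.mem_setOf_eq, Real.dist_eq, sub_zero] at hγ
    have hγ' : ε ≤ v (f * g) γ := by
      rw [abs_of_nonneg (vnonneg (f*g) γ)] at hγ
      exact not_lt.mp hγ
    have hne : (Finset.HasAntidiagonal.antidiagonal γ).Nonempty := ⟨(γ, 0), by simp⟩
    obtain ⟨p, hp, hple⟩ := IsUltrametricDist.exists_norm_finset_sum_le_of_nonempty hne
      (fun p : (Fin m →₀ ℕ) × (Fin m →₀ ℕ) => coeff p.1 f * coeff p.2 g)
    have hpsum : p.1 + p.2 = γ := Finset.HasAntidiagonal.mem_antidiagonal.mp hp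
    have key : v (f * g) γ ≤ v f p.1 * v g p.2 := by
      have hdeg : mdeg γ = mdeg p.1 + mdeg p.2 := by
        rw [← hpsum, mdeg_add]
      calc v (f * g) γ = ‖coeff γ (f * g)‖ * |r| ^ mdeg γ := rfl
        _ ≤ ‖coeff p.1 f * coeff p.2 g‖ * |r| ^ mdeg γ := by
            refine mul_le_mul_of_nonneg_right ?_ (by positivity)
            rw [MvPowerSeries.coeff_mul]
            exact hple
        _ = (‖coeff p.1 f‖ * |r| ^ mdeg p.1) * (‖coeff p.2 g‖ * |r| ^ mdeg p.2) := by
            rw [norm_mul, hdeg, pow_add]; ring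
    refine ⟨p, ⟨?_, ?_⟩, hpsum⟩
    · simp only [Set.mem_setOf_eq, not_lt]
      have h1 : ε ≤ v f p.1 * M := by
        refine hγ'.trans (key.trans ?_)
        exact mul_le_mul_of_nonneg_left ((hMg p.2).trans (le_max_right _ _)) (vnonneg f p.1)
      exact (div_le_iff₀ hM0).mpr h1
    · simp only [Set.mem_setOf_eq, not_lt]
      have h1 : ε ≤ M * v g p.2 := by
        refine hγ'.trans (key.trans ?_)
        exact mul_le_mul_of_nonneg_right ((hMf p.1).trans (le_max_left _ _)) (vnonneg g p.2)
      rw [hδdef, div_le_iff₀' hM0]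
      exact h1

lemma mem_A_iff {m : ℕ} {r : ℝ} {f : MvPowerSeries (Fin m) F} :
    f ∈ A F m r ↔ Tendsto (fun γ : Fin m →₀ ℕ => ‖coeff γ f‖ * r ^ mdeg γ)
      cofinite (nhds 0) := ⟨fun h => h, fun h => h⟩

instance {m : ℕ} : IsDomain (MvPowerSeries (Fin m) F) :=
  NoZeroDivisors.to_isDomain _

/-- The Gauss norm `|f|_r = sup_γ |a_γ| r^{|γ|}`. -/
noncomputable def nrm (r : ℝ) {m : ℕ} (f : MvPowerSeries (Fin m) F) : ℝ :=
  ⨆ γ : Fin m →₀ ℕ, ‖coeff γ f‖ * r ^ mdeg γ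

/-- For `0 < r ≤ R`, `A^m(R) ⊆ A^m(r)`. -/
lemma A_mono {m : ℕ} {r R : ℝ} (h0 : 0 < r) (hrR : r ≤ R) : A F m R ≤ A F m r := by
  intro f hf
  rw [mem_A_iff] at hf ⊢
  refine squeeze_zero (fun γ => by positivity) (fun γ => ?_) hf
  exact mul_le_mul_of_nonneg_left (pow_le_pow_left₀ h0.le hrR _) (norm_nonneg _)

/-- Evaluation of a power series at a point, as a (possibly junk) sum. -/
noncomputable def eval {m : ℕ} (f : MvPowerSeries (Fin m) F) (z : Fin m → F) : F :=
  ∑' γ : Fin m →₀ ℕ, coeff γ f * ∏ i, z i ^ (γ i)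

/-- The ring of integers `{a : |a| ≤ 1}` of `F`. -/
def O : Subring F where
  carrier := {a | ‖a‖ ≤ 1}
  zero_mem' := by simp
  one_mem' := by simp
  add_mem' := by
    intro a b ha hb
    exact (IsUltrametricDist.norm_add_le_max a b).trans (max_le ha hb)
  neg_mem' := by intro a ha; simpa using ha
  mul_mem' := by
    intro a b ha hb
    rw [Set.mem_setOf_eq, norm_mul]
    exact mul_le_one₀ ha (norm_nonneg b) hb

/-- The maximal ideal `{a : |a| < 1}` of the ring of integers. -/
def mIdeal : Ideal (O F) where
  carrier := {a | ‖(a : F)‖ < 1}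
  zero_mem' := by simp
  add_mem' := by
    intro a b ha hb
    exact lt_of_le_of_lt (IsUltrametricDist.norm_add_le_max (a : F) b) (max_lt ha hb)
  smul_mem' := by
    intro c a ha
    simp only [Set.mem_setOf_eq, smul_eq_mul] at ha ⊢
    rw [Subring.coe_mul, norm_mul]
    exact mul_lt_one_of_nonneg_of_lt_one_right c.2 (norm_nonneg _) ha

/-- The residue class field of `F`. -/
def Res := O F ⧸ mIdeal F

noncomputable instance : CommRing (Res F) := by unfold Res; infer_instance

/-- Reduction of an element of absolute value at most `1` to the residue field. -/
noncomputable def red (a : F) (h : ‖a‖ ≤ 1) : Res F :=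
  Ideal.Quotient.mk (mIdeal F) ⟨a, h⟩

/-- The ring of entire functions on `F^m`: power series lying in every `A^m(r)`. -/
def Ent (m : ℕ) : Subring (MvPowerSeries (Fin m) F) where
  carrier := {f | ∀ r ∈ VG F, f ∈ A F m r}
  zero_mem' := fun r _ => (A F m r).zero_mem
  one_mem' := fun r _ => (A F m r).one_mem
  add_mem' := fun hf hg r hr => (A F m r).add_mem (hf r hr) (hg r hr)
  neg_mem' := fun hf r hr => (A F m r).neg_mem (hf r hr)
  mul_mem' := fun hf hg r hr => (A F m r).mul_mem (hf r hr) (hg r hr)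

lemma mem_Ent_iff {m : ℕ} {f : MvPowerSeries (Fin m) F} :
    f ∈ Ent F m ↔ ∀ r ∈ VG F, f ∈ A F m r := Iff.rfl

/-- `d` is a greatest common divisor of the family `s`. -/
def IsGCDOf {α : Type*} [CommRing α] {ι : Type*} (d : α) (s : ι → α) : Prop :=
  (∀ i, d ∣ s i) ∧ ∀ e : α, (∀ i, e ∣ s i) → e ∣ d

section LastVariable

variable (m : ℕ)

/-- The subring of power series in `m+1` variables not depending on the last variable. -/
def indepLast : Subring (MvPowerSeries (Fin (m+1)) F) where
  carrier := {f | ∀ γ : Fin (m+1) →₀ ℕ, γ (Fin.last m) ≠ 0 → coeff γ f = 0}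
  zero_mem' := by intro γ _; simp
  one_mem' := by
    intro γ hγ
    have h : γ ≠ 0 := fun h => hγ (by simp [h])
    simp [MvPowerSeries.coeff_one, h]
  add_mem' := by
    intro f g hf hg γ hγ
    simp [map_add, hf γ hγ, hg γ hγ]
  neg_mem' := by
    intro f hf γ hγ
    simp [hf γ hγ]
  mul_mem' := by
    intro f g hf hg γ hγ
    rw [MvPowerSeries.coeff_mul]
    refine Finset.sum_eq_zero fun p hp => ?_
    have hpsum : p.1 + p.2 = γ := Finset.HasAntidiagonal.mem_antidiagonal.mp hp
    by_cases h1 : p.1 (Fin.last m) = 0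
    · have h2 : p.2 (Fin.last m) ≠ 0 := by
        intro h2
        apply hγ
        rw [← hpsum, Finsupp.add_apply, h1, h2]
      rw [hg p.2 h2, mul_zero]
    · rw [hf p.1 h1, zero_mul]

/-- The ring `A^{m-1}(r)`: analytic functions not depending on the last variable. -/
noncomputable def Aprev (r : ℝ) : Subring (MvPowerSeries (Fin (m+1)) F) :=
  A F (m+1) r ⊓ indepLast F m

lemma Aprev_le (r : ℝ) : Aprev F m r ≤ A F (m+1) r := inf_le_left

lemma X_mem (r : ℝ) {k : ℕ} (i : Fin k) : (X i : MvPowerSeries (Fin k) F) ∈ A F k r := by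
  rw [mem_A_iff]
  refine tendsto_const_nhds.congr' ?_
  refine Filter.eventuallyEq_of_mem
    ((Set.finite_singleton (Finsupp.single i 1)).compl_mem_cofinite) ?_
  intro γ hγ
  have h : γ ≠ Finsupp.single i 1 := by simpa using hγ
  simp [MvPowerSeries.X, MvPowerSeries.coeff_monomial, h]

/-- The last coordinate function `z_m` as an element of `A^m(r)`. -/
noncomputable def zmA (r : ℝ) : A F (m+1) r :=
  ⟨X (Fin.last m), X_mem F r (Fin.last m)⟩

/-- Interpret a polynomial `W ∈ A^{m-1}(r)[z_m]` as an analytic function in `A^m(r)`. -/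
noncomputable def toAm (r : ℝ) (W : Polynomial (Aprev F m r)) : A F (m+1) r :=
  Polynomial.eval₂ (Subring.inclusion (Aprev_le F m r)) (zmA F m r) W

/-- `W ∈ A^{m-1}(r)[z_m]` is a Weierstrass polynomial of degree `n = deg W`:
it is monic and `|W|_r = r^n`. -/
def IsWeierstrass (r : ℝ) (W : Polynomial (Aprev F m r)) : Prop :=
  W.Monic ∧ nrm F r ((toAm F m r W : A F (m+1) r) : MvPowerSeries (Fin (m+1)) F)
    = r ^ W.natDegree

/-- The coefficient `A_j` of `z_m^j` when `f` is written as `Σ_j A_j(z') z_m^j`,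
viewed as a power series not involving the last variable. -/
noncomputable def slice (f : MvPowerSeries (Fin (m+1)) F) (j : ℕ) :
    MvPowerSeries (Fin (m+1)) F :=
  fun γ => if γ (Fin.last m) = 0 then
    coeff (γ + Finsupp.single (Fin.last m) j) f else 0

/-- `f` is `z_m`-distinguished of degree `n` in `A^m(r)`: writing `f = Σ_j A_j z_m^j`,
`A_n` is a unit in `A^{m-1}(r)`, `|f|_r = |A_n|_r r^n`, and `|A_j|_r r^j < |A_n|_r r^n`
for `j > n`. -/
def IsDistinguished (r : ℝ) (f : MvPowerSeries (Fin (m+1)) F) (n : ℕ) : Prop :=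
  (∃ h : slice F m f n ∈ Aprev F m r, IsUnit (⟨slice F m f n, h⟩ : Aprev F m r)) ∧
  nrm F r f = nrm F r (slice F m f n) * r ^ n ∧
  ∀ j : ℕ, n < j → nrm F r (slice F m f j) * r ^ j < nrm F r (slice F m f n) * r ^ n

/-- The linear forms `z_i + u_i z_m` (and `z_m` for `i = m`) defining
the change of variables `σ_u`. -/
noncomputable def linSub (u : Fin m → F) (i : Fin (m+1)) : MvPolynomial (Fin (m+1)) F :=
  MvPolynomial.X i + (if h : (i : ℕ) < m then
    MvPolynomial.C (u ⟨i, h⟩) * MvPolynomial.X (Fin.last m) else 0)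

/-- The composition `f ∘ σ_u`, where
`σ_u(z_1,…,z_m) = (z_1 + u_1 z_m, …, z_{m-1} + u_{m-1} z_m, z_m)`. -/
noncomputable def sigmaSub (u : Fin m → F) (f : MvPowerSeries (Fin (m+1)) F) :
    MvPowerSeries (Fin (m+1)) F :=
  fun δ => ∑ t ∈ Finset.Nat.antidiagonalTuple (m+1) (mdeg δ),
    coeff (Finsupp.equivFunOnFinite.symm t) f *
      MvPolynomial.coeff δ (∏ i, linSub F m u i ^ t i)

end LastVariable

/-- The formal partial derivative `∂f/∂z_j` of a power series. -/
noncomputable def pderiv {m : ℕ} (j : Fin m) (f : MvPowerSeries (Fin m) F) :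
    MvPowerSeries (Fin m) F :=
  fun γ => ((γ j + 1 : ℕ) : F) * coeff (γ + Finsupp.single j 1) f

/-!
Setting `z' = 0` in the coefficients of `W` gives the monic polynomial `Q(z_m) = W(0,…,0,z_m)`
of degree `d`; its coefficients are coefficients of `W` viewed as a power series, so
`|q_j| r^j ≤ |W|_r = r^d`. As `F` is algebraically closed, `Q` has a root `b`, and by the
non-Archimedean bound of a root by the spectral value `max_{j<d} |q_j|^{1/(d-j)} ≤ r`
we get `|b| ≤ r`.
-/

end NA

namespace Polynomial

lemma spectralValue_le_of_norm_coeff_le {R : Type*} [SeminormedRing R] {p : R[X]} {r : ℝ}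
    (hr : 0 ≤ r) (hp : ∀ j < p.natDegree, ‖p.coeff j‖ ≤ r ^ (p.natDegree - j)) :
    spectralValue p ≤ r := by
  refine ciSup_le fun j => ?_
  unfold spectralValueTerms
  split_ifs with hj
  · rw [← Nat.cast_sub hj.le, one_div]
    calc ‖p.coeff j‖ ^ ((p.natDegree - j : ℕ) : ℝ)⁻¹
        ≤ (r ^ (p.natDegree - j)) ^ ((p.natDegree - j : ℕ) : ℝ)⁻¹ := by gcongr; exact hp j hj
      _ = r := Real.pow_rpow_inv_natCast hr (by omega)
  · exact hr

lemma norm_le_of_isRoot_of_norm_coeff_le {K : Type*} [NormedField K] [IsUltrametricDist K]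
    {p : K[X]} {r : ℝ} (hmonic : p.Monic) (hr : 0 ≤ r)
    (hp : ∀ j < p.natDegree, ‖p.coeff j‖ ≤ r ^ (p.natDegree - j)) {b : K} (hb : p.IsRoot b) :
    ‖b‖ ≤ r :=
  calc ‖b‖ ≤ spectralValue p :=
        norm_root_le_spectralValue (f := (NormedAlgebra.toMulAlgebraNorm K K).toAlgebraNorm)
          (MulRingNorm.isPowMul _) (fun x y => by simpa using IsUltrametricDist.norm_add_le_max x y)
          hmonic (by simpa [aeval_def] using hb)
    _ ≤ r := spectralValue_le_of_norm_coeff_le hr hp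

end Polynomial

namespace NA

open scoped Polynomial

variable (F : Type) [NormedField F] [IsUltrametricDist F]

lemma mdeg_single {m : ℕ} (i : Fin m) (j : ℕ) : mdeg (Finsupp.single i j) = j :=
  Finsupp.sum_single_index rfl

lemma le_nrm_of_mem_A {m : ℕ} {r : ℝ} {f : MvPowerSeries (Fin m) F} (hf : f ∈ A F m r)
    (γ : Fin m →₀ ℕ) : ‖coeff γ f‖ * r ^ mdeg γ ≤ nrm F r f :=
  le_ciSup ((mem_A_iff F).mp hf).bddAbove_range_of_cofinite γ

lemma eval_single_last {m : ℕ} {f : MvPowerSeries (Fin (m+1)) F} {P : F[X]}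
    (hP : ∀ j, coeff (Finsupp.single (Fin.last m) j) f = P.coeff j) (b : F) :
    eval F f (fun i => if i = Fin.last m then b else 0) = P.eval b := by
  have hprod (j : ℕ) :
      ∏ i, (if i = Fin.last m then b else 0) ^ (Finsupp.single (Fin.last m) j i) = b ^ j := by
    simp [Finsupp.single_apply]
  have hsupp : Function.support (fun γ => coeff γ f *
      ∏ i, (if i = Fin.last m then b else 0) ^ γ i) ⊆ Set.range (Finsupp.single (Fin.last m)) := by
    intro γ hγ
    refine ⟨γ (Fin.last m), Finsupp.ext fun i => ?_⟩
    by_cases hi : i = Fin.last m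
    · simp [hi]
    · by_contra hγi
      rw [Finsupp.single_eq_of_ne hi] at hγi
      refine hγ (mul_eq_zero_of_right _ (Finset.prod_eq_zero (Finset.mem_univ i) ?_))
      simp [hi, Ne.symm hγi]
  unfold eval
  rw [← (Finsupp.single_injective _).tsum_eq hsupp, Polynomial.eval_eq_sum, Polynomial.sum_def]
  simp only [hP, hprod]
  exact tsum_eq_sum fun j hj => by simp [Polynomial.notMem_support_iff.mp hj]

section LastCoordinate

variable (m : ℕ)

/-- `W.map (Aprev.constantCoeff F m r)` is the one-variable polynomial `W(0,…,0,z_m)`. -/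
noncomputable def Aprev.constantCoeff (r : ℝ) : Aprev F m r →+* F :=
  MvPowerSeries.constantCoeff.comp (Aprev F m r).subtype

lemma coeff_single_last_mul_X_pow {g : MvPowerSeries (Fin (m+1)) F} (hg : g ∈ indepLast F m)
    (j j' : ℕ) :
    coeff (Finsupp.single (Fin.last m) j') (g * X (Fin.last m) ^ j) =
      if j' = j then constantCoeff g else 0 := by
  simp only [X_pow_eq, MvPowerSeries.coeff_mul_monomial, mul_one, Finsupp.single_le_single,
    ← Finsupp.single_tsub]
  rcases lt_trichotomy j j' with hlt | rfl | hgt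
  · rw [if_pos hlt.le, if_neg hlt.ne', hg _ (by simpa using Nat.sub_ne_zero_of_lt hlt)]
  · simp [coeff_zero_eq_constantCoeff_apply]
  · rw [if_neg (not_le.mpr hgt), if_neg hgt.ne]

lemma coeff_single_last_toAm (r : ℝ) (W : (Aprev F m r)[X]) (j : ℕ) :
    coeff (Finsupp.single (Fin.last m) j) (toAm F m r W : MvPowerSeries (Fin (m+1)) F) =
      (W.map (Aprev.constantCoeff F m r)).coeff j := by
  induction W using Polynomial.induction_on' with
  | add p q hp hq =>
    rw [Polynomial.map_add, Polynomial.coeff_add, ← hp, ← hq, ← map_add]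
    simp only [toAm, Polynomial.eval₂_add, Subring.coe_add]
  | monomial n a =>
    simp only [toAm, Polynomial.eval₂_monomial, Subring.coe_mul, Subring.coe_pow, zmA]
    rw [Polynomial.map_monomial, Polynomial.coeff_monomial]
    exact (coeff_single_last_mul_X_pow F m (Subring.mem_inf.mp a.2).2 n j).trans
      (if_congr eq_comm rfl rfl)

lemma norm_coeff_map_constantCoeff_le {r : ℝ} (hr : 0 < r) {W : (Aprev F m r)[X]}
    (hW : IsWeierstrass F m r W) (j : ℕ) (hj : j < W.natDegree) :
    ‖(W.map (Aprev.constantCoeff F m r)).coeff j‖ ≤ r ^ (W.natDegree - j) := by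
  have h := le_nrm_of_mem_A F (toAm F m r W).2 (Finsupp.single (Fin.last m) j)
  rw [coeff_single_last_toAm, mdeg_single, hW.2, ← pow_sub_mul_pow r hj.le] at h
  exact le_of_mul_le_mul_right h (pow_pos hr j)

end LastCoordinate

theorem statement4 [IsAlgClosed F]
    (m : ℕ) (r : ℝ) (hr : r ∈ VG F)
    (W : Polynomial (Aprev F m r)) (hW : IsWeierstrass F m r W)
    (hd : 0 < W.natDegree) :
    ∃ b : F, ‖b‖ ≤ r ∧
      eval F ((toAm F m r W : A F (m+1) r) : MvPowerSeries (Fin (m+1)) F)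
        (fun i => if i = Fin.last m then b else 0) = 0 := by
  set Q := W.map (Aprev.constantCoeff F m r)
  have hQ : Q.Monic := hW.1.map _
  have hQdeg : Q.natDegree = W.natDegree := hW.1.natDegree_map _
  obtain ⟨b, hb⟩ := IsAlgClosed.exists_root Q <| by
    rw [Polynomial.degree_eq_natDegree hQ.ne_zero, hQdeg]
    exact_mod_cast hd.ne'
  refine ⟨b, Polynomial.norm_le_of_isRoot_of_norm_coeff_le hQ (VG.pos F hr).le ?_ hb, ?_⟩
  · rw [hQdeg]
    exact norm_coeff_map_constantCoeff_le F m (VG.pos F hr) hW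
  · rw [eval_single_last F (coeff_single_last_toAm F m r W)]
    exact hb

end NA
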